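/- Let 1 ≤ Q ≤ M and suppose M is odd or Q is even (i.e. exclude only the case of even M with odd Q). If γ_m ≠ 0 for every edge m (the couplings J_m arbitrary), then the kernel of H_γ + H_J restricted to W_Q^↑ has dimension at least 2^{M−1}; i.e. every such charge sector of the extended quantum breakdown model possesses at least 2^{M−1} exact zero modes. -/

import Mathlib

open scoped BigOperators

namespace QuantumBreakdown

/-- Basis index: pairs of an occupation configuration and a spin configuration. -/
abbrev Cfg (M : ℕ) := (Fin M → Bool) × (Fin M → Bool)

/-- The Hilbert space `V_M`. -/
abbrev V (M : ℕ) := Cfg M → ℂ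

/-- The basis vector `e_{n,s}`. -/
noncomputable def e (M : ℕ) (p : Cfg M) : V M := Pi.single p 1

/-- The linear operator determined by prescribed images of the basis vectors. -/
noncomputable def mkOp (M : ℕ) (f : Cfg M → V M) : V M →ₗ[ℂ] V M :=
  (Pi.basisFun ℂ (Cfg M)).constr ℂ f

/-- The left site of edge `m`. -/
def sL (M : ℕ) (m : Fin (M - 1)) : Fin M := ⟨m.1, by have := m.2; omega⟩

/-- The right site of edge `m`. -/
def sR (M : ℕ) (m : Fin (M - 1)) : Fin M := ⟨m.1 + 1, by have := m.2; omega⟩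

/-- Move a fermion from site `a` to site `b`. -/
def hop (M : ℕ) (n : Fin M → Bool) (a b : Fin M) : Fin M → Bool :=
  Function.update (Function.update n a false) b true

/-- The hopping term `H_γ`. -/
noncomputable def Hgam (M : ℕ) (γ : Fin (M - 1) → ℝ) : V M →ₗ[ℂ] V M :=
  mkOp M fun p =>
    -∑ m : Fin (M - 1), (γ m : ℂ) •
      ((if p.1 (sL M m) = true ∧ p.1 (sR M m) = false then
          e M (hop M p.1 (sL M m) (sR M m), p.2) else 0)
        +
       (if p.1 (sR M m) = true ∧ p.1 (sL M m) = false then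
          e M (hop M p.1 (sR M m) (sL M m), p.2) else 0))

/-- The breakdown interaction `H_J`. -/
noncomputable def HJop (M : ℕ) (J : Fin (M - 1) → ℝ) : V M →ₗ[ℂ] V M :=
  mkOp M fun p =>
    ∑ m : Fin (M - 1), (J m : ℂ) •
      ((if p.1 (sL M m) = true ∧ p.1 (sR M m) = false ∧ p.2 (sR M m) = false then
          e M (hop M p.1 (sL M m) (sR M m), Function.update p.2 (sR M m) true) else 0)
        +
       (if p.1 (sR M m) = true ∧ p.1 (sL M m) = false ∧ p.2 (sR M m) = true then
          e M (hop M p.1 (sR M m) (sL M m), Function.update p.2 (sR M m) false) else 0))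

/-- The on-site potential `H_μ`. -/
noncomputable def Hmu (M : ℕ) (μ : Fin M → ℝ) : V M →ₗ[ℂ] V M :=
  mkOp M fun p => (∑ m : Fin M, if p.1 m = true then (μ m : ℂ) else 0) • e M p

/-- Pauli `σ^x` at site `m`. -/
noncomputable def sigx (M : ℕ) (m : Fin M) : V M →ₗ[ℂ] V M :=
  mkOp M fun p => e M (p.1, Function.update p.2 m (!p.2 m))

/-- Pauli `σ^y` at site `m`. -/
noncomputable def sigy (M : ℕ) (m : Fin M) : V M →ₗ[ℂ] V M :=
  mkOp M fun p =>
    (if p.2 m = true then Complex.I else -Complex.I) • e M (p.1, Function.update p.2 m (!p.2 m))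

/-- Pauli `σ^z` at site `m`. -/
noncomputable def sigz (M : ℕ) (m : Fin M) : V M →ₗ[ℂ] V M :=
  mkOp M fun p => (if p.2 m = true then (1 : ℂ) else -1) • e M p

/-- The magnetic field term `H_h`. -/
noncomputable def Hh (M : ℕ) (hx hy hz : Fin M → ℝ) : V M →ₗ[ℂ] V M :=
  ∑ m : Fin M, ((hx m : ℂ) • sigx M m + (hy m : ℂ) • sigy M m + (hz m : ℂ) • sigz M m)

/-- Number of occupied sites of an occupation configuration. -/
def nOcc (M : ℕ) (n : Fin M → Bool) : ℕ := (Finset.univ.filter fun m => n m = true).card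

/-- The number operator `N`. -/
noncomputable def numOp (M : ℕ) : V M →ₗ[ℂ] V M :=
  mkOp M fun p => (nOcc M p.1 : ℂ) • e M p

/-- The charge-`Q` sector `W_Q`. -/
noncomputable def sector (M Q : ℕ) : Submodule ℂ (V M) :=
  Submodule.span ℂ { v | ∃ p : Cfg M, nOcc M p.1 = Q ∧ v = e M p }

/-- The charge-`Q` sector with first spin up, `W_Q^↑`. -/
noncomputable def sectorUp (M : ℕ) (hM : 0 < M) (Q : ℕ) : Submodule ℂ (V M) :=
  Submodule.span ℂ { v | ∃ p : Cfg M, nOcc M p.1 = Q ∧ p.2 ⟨0, hM⟩ = true ∧ v = e M p }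

end QuantumBreakdown

open QuantumBreakdown

/-!
Every term of `H_γ + H_J` moves one fermion by one site, so it changes the dipole moment
`∑ m n_m` by `±1`: with respect to the `ℤ/2`-grading of `W_Q^↑` by dipole parity the Hamiltonian
is chiral, mapping each parity class into the other. By rank–nullity its kernel therefore has
dimension at least the difference of the dimensions of the two classes, which is
`2^(M-1)` times the signed count `∑_{|n| = Q} (-1)^(∑ m n_m)`. That count is the coefficient of
`X^Q` in `∏_m (1 + (-1)^m X) = (1 - X²)^⌊M/2⌋ (1 + X)^(M mod 2)`, namely `±(⌊M/2⌋ choose ⌊Q/2⌋)`,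
which is nonzero unless `M` is even and `Q` is odd.
-/

theorem Submodule.finrank_le_finrank_add_finrank_inf_ker {K V V' : Type*} [DivisionRing K]
    [AddCommGroup V] [Module K V] [FiniteDimensional K V] [AddCommGroup V'] [Module K V']
    [FiniteDimensional K V'] {U : Submodule K V} {W : Submodule K V'} {f : V →ₗ[K] V'}
    (h : U.map f ≤ W) :
    Module.finrank K U ≤ Module.finrank K W + Module.finrank K ↥(U ⊓ LinearMap.ker f) := by
  let g : U →ₗ[K] W := f.restrict fun x hx => h ⟨x, hx, rfl⟩
  have hker : Module.finrank K (LinearMap.ker g) = Module.finrank K ↥(U ⊓ LinearMap.ker f) := by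
    rw [LinearMap.ker_restrict, ← Submodule.map_comap_subtype, Submodule.finrank_map_subtype_eq]
  rw [← g.finrank_range_add_finrank_ker, hker]
  exact Nat.add_le_add_right (Submodule.finrank_le _) _

theorem Fintype.sum_apply_update_add {ι α β : Type*} [Fintype ι] [DecidableEq ι]
    [AddCommMonoid β] (G : ι → α → β) (f : ι → α) (a : ι) (v : α) :
    ∑ i, G i (Function.update f a v i) + G a (f a) = ∑ i, G i (f i) + G a v := by
  simp_rw [Function.apply_update G, Finset.sum_update_of_mem (Finset.mem_univ a)]
  rw [Finset.sum_eq_add_sum_sdiff_singleton_of_mem (Finset.mem_univ a) (fun i => G i (f i))]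
  abel

theorem Fintype.sum_pi_fin_succ {α β : Type*} [Fintype α] [AddCommMonoid β] {n : ℕ}
    (F : (Fin (n + 1) → α) → β) :
    ∑ f, F f = ∑ x : α, ∑ g : Fin n → α, F (Fin.snoc g x) := by
  rw [← (Fin.snocEquiv fun _ => α).sum_comp, Fintype.sum_prod_type]
  rfl

namespace QuantumBreakdown

variable {M : ℕ}

theorem mkOp_e (f : Cfg M → V M) (p : Cfg M) : mkOp M f (e M p) = f p := by
  rw [mkOp, e, ← Pi.basisFun_apply ℂ, Module.Basis.constr_basis]

theorem linearIndependent_e : LinearIndependent ℂ (e M) :=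
  Pi.linearIndependent_single_one _ ℂ

theorem finrank_span_image_e (s : Finset (Cfg M)) :
    Module.finrank ℂ (Submodule.span ℂ (e M '' s)) = s.card := by
  have h :=
    finrank_span_eq_card (linearIndependent_e.comp ((↑) : s → Cfg M) Subtype.val_injective)
  rw [Fintype.card_coe] at h
  rwa [Set.image_eq_range]

-- Sites are indexed from `0` (from `1` in the paper): this shifts the dipole by the constant `Q`
-- on each charge sector.
def dipole (M : ℕ) (n : Fin M → Bool) : ℕ := ∑ m : Fin M, if n m then m.1 else 0

theorem dipole_update_add (f : Fin M → Bool) (a : Fin M) (v : Bool) :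
    dipole M (Function.update f a v) + (if f a then a.1 else 0)
      = dipole M f + (if v then a.1 else 0) :=
  Fintype.sum_apply_update_add (fun m b => if b then m.1 else 0) f a v

theorem nOcc_update_add (f : Fin M → Bool) (a : Fin M) (v : Bool) :
    nOcc M (Function.update f a v) + (if f a then 1 else 0)
      = nOcc M f + (if v then 1 else 0) := by
  simp only [nOcc, Finset.card_filter]
  exact Fintype.sum_apply_update_add (fun _ b => if b = true then 1 else 0) f a v

theorem nOcc_hop {n : Fin M → Bool} {a b : Fin M} (ha : n a = true) (hb : n b = false) :
    nOcc M (hop M n a b) = nOcc M n := by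
  have hba : b ≠ a := by rintro rfl; simp_all
  have h₁ := nOcc_update_add n a false
  have h₂ := nOcc_update_add (Function.update n a false) b true
  simp only [Function.update_of_ne hba, ha, hb, Bool.false_eq_true, ↓reduceIte] at h₁ h₂
  simp only [hop]
  omega

theorem dipole_hop_add {n : Fin M → Bool} {a b : Fin M} (ha : n a = true) (hb : n b = false) :
    dipole M (hop M n a b) + a.1 = dipole M n + b.1 := by
  have hba : b ≠ a := by rintro rfl; simp_all
  have h₁ := dipole_update_add n a false
  have h₂ := dipole_update_add (Function.update n a false) b true
  simp only [Function.update_of_ne hba, ha, hb, Bool.false_eq_true, ↓reduceIte] at h₁ h₂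
  simp only [hop]
  omega

theorem nOcc_snoc (g : Fin M → Bool) (x : Bool) :
    nOcc (M + 1) (Fin.snoc g x) = nOcc M g + if x then 1 else 0 := by
  simp only [nOcc, Finset.card_filter, Fin.sum_univ_castSucc, Fin.snoc_castSucc, Fin.snoc_last]

theorem dipole_snoc (g : Fin M → Bool) (x : Bool) :
    dipole (M + 1) (Fin.snoc g x) = dipole M g + if x then M else 0 := by
  simp [dipole, Fin.sum_univ_castSucc]

def signedCount (M Q : ℕ) : ℤ :=
  ∑ n : Fin M → Bool, if nOcc M n = Q then (-1) ^ dipole M n else 0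

theorem signedCount_succ_zero (M : ℕ) : signedCount (M + 1) 0 = signedCount M 0 := by
  simp [signedCount, Fintype.sum_pi_fin_succ, nOcc_snoc, dipole_snoc]

theorem signedCount_succ_succ (M Q : ℕ) :
    signedCount (M + 1) (Q + 1) = signedCount M (Q + 1) + (-1) ^ M * signedCount M Q := by
  simp only [signedCount, Fintype.sum_pi_fin_succ, Fintype.sum_bool, nOcc_snoc, dipole_snoc,
    Finset.mul_sum, ↓reduceIte, Bool.false_eq_true, add_zero, add_left_inj, pow_add, pow_zero,
    mul_one]
  rw [add_comm]
  congr 1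
  refine Finset.sum_congr rfl fun g _ => ?_
  split_ifs <;> ring

theorem signedCount_two_mul_add_one_of_two_mul {k : ℕ}
    (h : ∀ Q, signedCount (2 * k) Q =
      if Even Q then (-1) ^ (Q / 2) * (k.choose (Q / 2) : ℤ) else 0) (Q : ℕ) :
    signedCount (2 * k + 1) Q = (-1) ^ (Q / 2) * (k.choose (Q / 2) : ℤ) := by
  cases Q with
  | zero => simp [signedCount_succ_zero, h]
  | succ Q =>
    rw [signedCount_succ_succ, h, h, (even_two_mul k).neg_one_pow, one_mul]
    obtain ⟨j, rfl | rfl⟩ := Nat.even_or_odd' Q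
    · simp [show (2 * j + 1) / 2 = j by omega]
    · simp [Nat.even_add_one, show (2 * j + 1 + 1) / 2 = j + 1 by omega]

theorem signedCount_two_mul (k : ℕ) :
    ∀ Q, signedCount (2 * k) Q =
      if Even Q then (-1) ^ (Q / 2) * (k.choose (Q / 2) : ℤ) else 0 := by
  induction k with
  | zero =>
    intro Q
    obtain ⟨j, rfl | rfl⟩ := Nat.even_or_odd' Q
    · cases j <;> simp [signedCount, nOcc, dipole]
    · simp [signedCount, nOcc]
  | succ k ih =>
    have hodd := signedCount_two_mul_add_one_of_two_mul ih
    intro Q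
    cases Q with
    | zero => simp [show 2 * (k + 1) = 2 * k + 1 + 1 by ring, signedCount_succ_zero, hodd]
    | succ Q =>
      rw [show 2 * (k + 1) = 2 * k + 1 + 1 by ring, signedCount_succ_succ, hodd, hodd,
        (odd_two_mul_add_one k).neg_one_pow]
      obtain ⟨j, rfl | rfl⟩ := Nat.even_or_odd' Q
      · simp [show (2 * j + 1) / 2 = j by omega]
      · simp [Nat.even_add_one, show (2 * j + 1 + 1) / 2 = j + 1 by omega,
          show (2 * j + 1) / 2 = j by omega, Nat.choose_succ_succ', pow_succ]
        ring

theorem signedCount_ne_zero {Q : ℕ} (hQM : Q ≤ M) (hpar : Odd M ∨ Even Q) :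
    signedCount M Q ≠ 0 := by
  have hchoose (k j : ℕ) (hjk : j ≤ k) : (-1 : ℤ) ^ j * (k.choose j : ℤ) ≠ 0 :=
    mul_ne_zero (pow_ne_zero _ (by norm_num)) (Nat.cast_ne_zero.mpr (Nat.choose_pos hjk).ne')
  obtain ⟨k, rfl | rfl⟩ := Nat.even_or_odd' M
  · have hQ : Even Q := hpar.resolve_left (Nat.not_odd_iff_even.mpr (even_two_mul k))
    rw [signedCount_two_mul, if_pos hQ]
    exact hchoose k _ (by omega)
  · rw [signedCount_two_mul_add_one_of_two_mul (signedCount_two_mul k)]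
    exact hchoose k _ (by omega)

def chiralOcc (M Q : ℕ) (c : ZMod 2) : Finset (Fin M → Bool) :=
  Finset.univ.filter fun n => nOcc M n = Q ∧ (dipole M n : ZMod 2) = c

theorem signedCount_eq_card_sub_card (M Q : ℕ) :
    signedCount M Q = (chiralOcc M Q 0).card - (chiralOcc M Q 1).card := by
  rw [signedCount, chiralOcc, chiralOcc, Finset.natCast_card_filter, Finset.natCast_card_filter,
    ← Finset.sum_sub_distrib]
  refine Finset.sum_congr rfl fun n _ => ?_
  by_cases hQ : nOcc M n = Q
  · rcases Nat.even_or_odd (dipole M n) with h | h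
    · simp [hQ, h.neg_one_pow, (ZMod.natCast_eq_zero_iff_even).mpr h]
    · simp [hQ, h.neg_one_pow, (ZMod.natCast_eq_one_iff_odd).mpr h]
  · simp [hQ]

theorem exists_card_chiralOcc_lt {Q : ℕ} (h : signedCount M Q ≠ 0) :
    ∃ c, (chiralOcc M Q (c + 1)).card < (chiralOcc M Q c).card := by
  rw [signedCount_eq_card_sub_card, sub_ne_zero, Ne, Nat.cast_inj] at h
  rcases Nat.lt_or_gt_of_ne h with h | h
  · exact ⟨1, h⟩
  · exact ⟨0, h⟩

theorem card_filter_apply_eq_true (z : Fin M) :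
    (Finset.univ.filter fun s : Fin M → Bool => s z = true).card = 2 ^ (M - 1) := by
  have hpi : (Finset.univ.filter fun s : Fin M → Bool => s z = true)
      = Fintype.piFinset fun i => if i = z then {true} else Finset.univ := by
    ext s
    simp only [Finset.mem_filter, Finset.mem_univ, true_and, Fintype.mem_piFinset]
    constructor
    · intro h i
      split_ifs with hi <;> simp [hi, h]
    · intro h
      simpa using h z
  rw [hpi, Fintype.card_piFinset]
  simp [apply_ite Finset.card, Finset.prod_ite, Finset.filter_ne', Finset.card_erase_of_mem]

def chiralSector (M : ℕ) (h0 : 0 < M) (Q : ℕ) (c : ZMod 2) : Submodule ℂ (V M) :=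
  Submodule.span ℂ
    (e M '' ↑(chiralOcc M Q c ×ˢ
      Finset.univ.filter fun s : Fin M → Bool => s ⟨0, h0⟩ = true))

theorem finrank_chiralSector (h0 : 0 < M) (Q : ℕ) (c : ZMod 2) :
    Module.finrank ℂ (chiralSector M h0 Q c) = (chiralOcc M Q c).card * 2 ^ (M - 1) := by
  rw [chiralSector, finrank_span_image_e, Finset.card_product, card_filter_apply_eq_true]

theorem e_mem_chiralSector {h0 : 0 < M} {Q : ℕ} {c : ZMod 2} {p : Cfg M}
    (hQ : nOcc M p.1 = Q) (hc : (dipole M p.1 : ZMod 2) = c) (hs : p.2 ⟨0, h0⟩ = true) :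
    e M p ∈ chiralSector M h0 Q c :=
  Submodule.subset_span ⟨p, by simp [chiralOcc, hQ, hc, hs], rfl⟩

theorem chiralSector_le_sectorUp (h0 : 0 < M) (Q : ℕ) (c : ZMod 2) :
    chiralSector M h0 Q c ≤ sectorUp M h0 Q := by
  rw [chiralSector, Submodule.span_le]
  rintro _ ⟨p, hp, rfl⟩
  simp only [Finset.coe_product, Set.mem_prod, chiralOcc, Finset.coe_filter, Set.mem_ofPred_eq,
    Finset.mem_univ, true_and] at hp
  exact Submodule.subset_span ⟨p, hp.1.1, hp.2, rfl⟩

theorem e_hop_mem_chiralSector {h0 : 0 < M} {Q : ℕ} {c : ZMod 2} {n s : Fin M → Bool}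
    {a b : Fin M} (hQ : nOcc M n = Q) (hc : (dipole M n : ZMod 2) = c) (hs : s ⟨0, h0⟩ = true)
    (ha : n a = true) (hb : n b = false) (hab : a.1 + 1 = b.1 ∨ b.1 + 1 = a.1) :
    e M (hop M n a b, s) ∈ chiralSector M h0 Q (c + 1) := by
  refine e_mem_chiralSector ((nOcc_hop ha hb).trans hQ) ?_ hs
  have hdip := congrArg (fun k : ℕ => (k : ZMod 2)) (dipole_hop_add ha hb)
  -- a hop to the left also adds `1`, since `-1 = 1` in `ZMod 2`
  have htwo : (2 : ZMod 2) = 0 := rfl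
  rcases hab with hab | hab <;> simp only [← hab, Nat.cast_add, Nat.cast_one] at hdip
  · linear_combination hdip + hc
  · linear_combination hdip + hc - htwo

theorem update_sR_apply_zero (h0 : 0 < M) (m : Fin (M - 1)) (s : Fin M → Bool) (v : Bool) :
    Function.update s (sR M m) v ⟨0, h0⟩ = s ⟨0, h0⟩ :=
  Function.update_of_ne (fun h => by simp [sR, Fin.ext_iff] at h) v s

theorem hamiltonian_e_mem_chiralSector (γ J : Fin (M - 1) → ℝ) {h0 : 0 < M} {Q : ℕ}
    {c : ZMod 2} {p : Cfg M} (hQ : nOcc M p.1 = Q) (hc : (dipole M p.1 : ZMod 2) = c)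
    (hs : p.2 ⟨0, h0⟩ = true) :
    (Hgam M γ + HJop M J) (e M p) ∈ chiralSector M h0 Q (c + 1) := by
  have hs' (m : Fin (M - 1)) (v : Bool) : Function.update p.2 (sR M m) v ⟨0, h0⟩ = true := by
    rw [update_sR_apply_zero, hs]
  rw [LinearMap.add_apply, Hgam, HJop, mkOp_e, mkOp_e]
  refine add_mem (neg_mem (Submodule.sum_mem _ fun m _ => Submodule.smul_mem _ _ (add_mem ?_ ?_)))
    (Submodule.sum_mem _ fun m _ => Submodule.smul_mem _ _ (add_mem ?_ ?_)) <;>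
  split_ifs with h
  all_goals first
    | exact zero_mem _
    | exact e_hop_mem_chiralSector hQ hc hs h.1 h.2 (.inl rfl)
    | exact e_hop_mem_chiralSector hQ hc hs h.1 h.2 (.inr rfl)
    | exact e_hop_mem_chiralSector hQ hc (hs' m _) h.1 h.2.1 (.inl rfl)
    | exact e_hop_mem_chiralSector hQ hc (hs' m _) h.1 h.2.1 (.inr rfl)

theorem map_chiralSector_le (γ J : Fin (M - 1) → ℝ) (h0 : 0 < M) (Q : ℕ) (c : ZMod 2) :
    (chiralSector M h0 Q c).map (Hgam M γ + HJop M J) ≤ chiralSector M h0 Q (c + 1) := by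
  rw [chiralSector, Submodule.map_span_le]
  rintro _ ⟨p, hp, rfl⟩
  simp only [Finset.coe_product, Set.mem_prod, chiralOcc, Finset.coe_filter, Set.mem_ofPred_eq,
    Finset.mem_univ, true_and] at hp
  exact hamiltonian_e_mem_chiralSector γ J hp.1.1 hp.1.2 hp.2

end QuantumBreakdown

/-- for `1 ≤ Q ≤ M` with `M` odd or `Q` even (excluding only even
`M` with odd `Q`), and nonvanishing hoppings `γ_m ≠ 0` (`J` arbitrary), the
kernel of `H_γ + H_J` restricted to `W_Q^↑` has dimension at least `2^{M−1}`:
every such charge sector possesses at least `2^{M−1}` exact zero modes. -/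
theorem zero_modes_general_Q (M Q : ℕ) (hM : 2 ≤ M) (hQM : Q ≤ M)
    (hpar : Odd M ∨ Even Q)
    (γ J : Fin (M - 1) → ℝ) :
    2 ^ (M - 1) ≤ Module.finrank ℂ
      ↥(sectorUp M (by omega) Q ⊓ LinearMap.ker (Hgam M γ + HJop M J)) := by
  have h0 : 0 < M := by omega
  obtain ⟨c, hc⟩ := exists_card_chiralOcc_lt (signedCount_ne_zero hQM hpar)
  have hrank := Submodule.finrank_le_finrank_add_finrank_inf_ker (map_chiralSector_le γ J h0 Q c)
  have hmono := Submodule.finrank_mono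
    (inf_le_inf_right (LinearMap.ker (Hgam M γ + HJop M J)) (chiralSector_le_sectorUp h0 Q c))
  rw [finrank_chiralSector, finrank_chiralSector] at hrank
  nlinarith
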